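/- The kinetic energy expressed in extended momentum coordinates splits into task-space and null-space parts: for p ∈ ℝⁿ and π_e = J̄⁻ᵀ p, writing π_e = (π; π_ν) with π ∈ ℝᵐ and π_ν ∈ ℝⁿ⁻ᵐ, one has (1/2) pᵀ M⁻¹ p = (1/2) π_eᵀ J̄ M⁻¹ J̄ᵀ π_e = (1/2) πᵀ Λ_t⁻¹ π + (1/2) π_νᵀ Λ_ν⁻¹ π_ν, where Λ_t = (J M⁻¹ Jᵀ)⁻¹ and Λ_ν = Z M Zᵀ. -/

import Mathlib

/-!
Since `B` inverts `J̄`, the momentum is `p = J̄ᵀ π_e`, so `pᵀ M⁻¹ p = π_eᵀ (J̄ M⁻¹ J̄ᵀ) π_e`.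
With `N = (Z M Zᵀ)⁻¹ Z M` one has `J M⁻¹ Nᵀ = J Zᵀ (Z M Zᵀ)⁻¹ = 0` and
`N M⁻¹ Nᵀ = (Z M Zᵀ)⁻¹`, so `J̄ M⁻¹ J̄ᵀ` is block diagonal with blocks `J M⁻¹ Jᵀ = Λ_t⁻¹`
(invertible, as `J` has full row rank) and `Λ_ν⁻¹`.
-/

open Matrix

namespace Matrix

section Rank

variable {R : Type*} [Field R] {m n : Type*} [Fintype m] [Fintype n]

theorem vecMul_injective_of_rank_eq_card {A : Matrix m n R} (hA : A.rank = Fintype.card m) :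
    Function.Injective A.vecMul := by
  rw [vecMul_injective_iff, linearIndependent_iff_card_eq_finrank_span, Set.finrank,
    ← rank_eq_finrank_span_row, hA]

theorem PosDef.mul_mul_transpose_of_rank_eq_card {M : Matrix n n ℝ} (hM : M.PosDef)
    {A : Matrix m n ℝ} (hA : A.rank = Fintype.card m) : (A * M * Aᵀ).PosDef := by
  simpa [conjTranspose_eq_transpose_of_trivial] using
    hM.mul_mul_conjTranspose_same (vecMul_injective_of_rank_eq_card hA)

end Rank

section Quadratic

variable {R : Type*} [CommSemiring R] {k l m n : Type*}

theorem dotProduct_mul_mul_transpose_mulVec [Fintype m] [Fintype n] (A : Matrix n n R)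
    (B : Matrix m n R) (x : m → R) :
    x ⬝ᵥ (B * A * Bᵀ) *ᵥ x = (x ᵥ* B) ⬝ᵥ A *ᵥ (x ᵥ* B) := by
  rw [← mulVec_mulVec, ← mulVec_mulVec, dotProduct_mulVec, mulVec_transpose]

theorem sumElim_dotProduct_fromBlocks_zero_mulVec_sumElim [Fintype k] [Fintype l]
    (A : Matrix k k R) (D : Matrix l l R) (u : k → R) (v : l → R) :
    Sum.elim u v ⬝ᵥ fromBlocks A 0 0 D *ᵥ Sum.elim u v = u ⬝ᵥ A *ᵥ u + v ⬝ᵥ D *ᵥ v := by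
  simp [fromBlocks_mulVec, sumElim_dotProduct_sumElim]

end Quadratic

section Inverse

variable {R : Type*} [CommRing R] {n : Type*} [Fintype n] [DecidableEq n]

theorem nonsing_inv_mul_mul_nonsing_inv (A : Matrix n n R) : A⁻¹ * A * A⁻¹ = A⁻¹ := by
  by_cases hA : IsUnit A.det
  · rw [nonsing_inv_mul _ hA, one_mul]
  · simp [nonsing_inv_apply_not_isUnit _ hA]

end Inverse

section ExtendedJacobian

variable {R : Type*} [CommRing R] {m n k : Type*} [Fintype n] [Fintype k] [DecidableEq k]
  {M : Matrix n n R} (J : Matrix m n R) (Z : Matrix k n R)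

theorem transpose_nonsing_inv_mul_mul (hM : Mᵀ = M) :
    ((Z * M * Zᵀ)⁻¹ * Z * M)ᵀ = M * Zᵀ * (Z * M * Zᵀ)⁻¹ := by
  have hS : (Z * M * Zᵀ)ᵀ = Z * M * Zᵀ := by simp [transpose_mul, hM, Matrix.mul_assoc]
  rw [transpose_mul, transpose_mul, transpose_nonsing_inv, hS, hM]
  simp only [Matrix.mul_assoc]

variable [DecidableEq n]

theorem mul_nonsing_inv_mul_transpose_eq_zero (hM : Mᵀ = M) (hMdet : IsUnit M.det)
    (hJZ : J * Zᵀ = 0) : J * M⁻¹ * ((Z * M * Zᵀ)⁻¹ * Z * M)ᵀ = 0 := by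
  rw [transpose_nonsing_inv_mul_mul Z hM]
  calc J * M⁻¹ * (M * Zᵀ * (Z * M * Zᵀ)⁻¹) = J * (M⁻¹ * M) * Zᵀ * (Z * M * Zᵀ)⁻¹ := by
        simp only [Matrix.mul_assoc]
    _ = 0 := by rw [nonsing_inv_mul _ hMdet, Matrix.mul_one, hJZ, Matrix.zero_mul]

theorem mul_nonsing_inv_mul_transpose_self (hM : Mᵀ = M) (hMdet : IsUnit M.det) :
    (Z * M * Zᵀ)⁻¹ * Z * M * M⁻¹ * ((Z * M * Zᵀ)⁻¹ * Z * M)ᵀ = (Z * M * Zᵀ)⁻¹ := by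
  rw [transpose_nonsing_inv_mul_mul Z hM]
  calc (Z * M * Zᵀ)⁻¹ * Z * M * M⁻¹ * (M * Zᵀ * (Z * M * Zᵀ)⁻¹)
      = (Z * M * Zᵀ)⁻¹ * (Z * (M * M⁻¹) * M * Zᵀ) * (Z * M * Zᵀ)⁻¹ := by
        simp only [Matrix.mul_assoc]
    _ = (Z * M * Zᵀ)⁻¹ := by
        rw [mul_nonsing_inv _ hMdet, Matrix.mul_one, nonsing_inv_mul_mul_nonsing_inv]

theorem fromRows_mul_nonsing_inv_mul_transpose_fromRows (hM : Mᵀ = M) (hMdet : IsUnit M.det)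
    (hJZ : J * Zᵀ = 0) :
    fromRows J ((Z * M * Zᵀ)⁻¹ * Z * M) * M⁻¹ * (fromRows J ((Z * M * Zᵀ)⁻¹ * Z * M))ᵀ =
      fromBlocks (J * M⁻¹ * Jᵀ) 0 0 (Z * M * Zᵀ)⁻¹ := by
  have hcross := mul_nonsing_inv_mul_transpose_eq_zero J Z hM hMdet hJZ
  have hcross' : (Z * M * Zᵀ)⁻¹ * Z * M * M⁻¹ * Jᵀ = 0 := by
    simpa [transpose_mul, transpose_nonsing_inv, hM, Matrix.mul_assoc] using
      congrArg transpose hcross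
  rw [transpose_fromRows, fromRows_mul, fromRows_mul_fromCols, hcross, hcross',
    mul_nonsing_inv_mul_transpose_self Z hM hMdet]

end ExtendedJacobian

end Matrix

theorem kinetic_energy_extended_momentum_split_general
    {n m : ℕ}
    (M : Matrix (Fin n) (Fin n) ℝ) (J : Matrix (Fin m) (Fin n) ℝ)
    (Z : Matrix (Fin (n - m)) (Fin n) ℝ)
    (hM : M.PosDef) (hJ : J.rank = m)
    (hJZ : J * Zᵀ = 0)
    (B : Matrix (Fin n) (Fin m ⊕ Fin (n - m)) ℝ)
    (hB₂ : B * (fromRows J ((Z * M * Zᵀ)⁻¹ * Z * M)) =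
        (1 : Matrix (Fin n) (Fin n) ℝ))
    (p : Fin n → ℝ) (πe : Fin m ⊕ Fin (n - m) → ℝ)
    (π : Fin m → ℝ) (πν : Fin (n - m) → ℝ)
    (hπe : πe = Bᵀ.mulVec p)
    (hπ : π = fun i => πe (Sum.inl i))
    (hπν : πν = fun j => πe (Sum.inr j)) :
    (1 / 2 : ℝ) * (p ⬝ᵥ M⁻¹.mulVec p) =
      (1 / 2 : ℝ) * (πe ⬝ᵥ ((fromRows J ((Z * M * Zᵀ)⁻¹ * Z * M)) * M⁻¹ *
        (fromRows J ((Z * M * Zᵀ)⁻¹ * Z * M))ᵀ).mulVec πe) ∧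
    (1 / 2 : ℝ) * (p ⬝ᵥ M⁻¹.mulVec p) =
      (1 / 2 : ℝ) * (π ⬝ᵥ ((J * M⁻¹ * Jᵀ)⁻¹)⁻¹.mulVec π) +
      (1 / 2 : ℝ) * (πν ⬝ᵥ (Z * M * Zᵀ)⁻¹.mulVec πν) := by
  have hMt : Mᵀ = M := hM.isHermitian
  have hMdet : IsUnit M.det := (isUnit_iff_isUnit_det M).mp hM.isUnit
  have hΛt : IsUnit (J * M⁻¹ * Jᵀ).det := (isUnit_iff_isUnit_det _).mp
    (hM.inv.mul_mul_transpose_of_rank_eq_card (by rwa [Fintype.card_fin])).isUnit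
  have hp : πe ᵥ* fromRows J ((Z * M * Zᵀ)⁻¹ * Z * M) = p := by
    rw [hπe, mulVec_transpose, vecMul_vecMul, hB₂, vecMul_one]
  have hK : p ⬝ᵥ M⁻¹ *ᵥ p = πe ⬝ᵥ (fromRows J ((Z * M * Zᵀ)⁻¹ * Z * M) * M⁻¹ *
      (fromRows J ((Z * M * Zᵀ)⁻¹ * Z * M))ᵀ) *ᵥ πe := by
    rw [dotProduct_mul_mul_transpose_mulVec, hp]
  have hsplit : πe = Sum.elim π πν := by
    ext (i | j) <;> simp [hπ, hπν]
  refine ⟨by rw [hK], ?_⟩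
  rw [hK, fromRows_mul_nonsing_inv_mul_transpose_fromRows J Z hMt hMdet hJZ,
    nonsing_inv_nonsing_inv _ hΛt, hsplit, sumElim_dotProduct_fromBlocks_zero_mulVec_sumElim,
    mul_add]

/-- Kinetic energy in extended momentum coordinates splits
into task-space and null-space parts: with `J̄ = [J; N]`
(`N = (Z M Zᵀ)⁻¹ Z M`), `B = J̄⁻¹`, and `π_e = J̄⁻ᵀ p = (π; π_ν)`, one has
`(1/2) pᵀ M⁻¹ p = (1/2) π_eᵀ (J̄ M⁻¹ J̄ᵀ) π_e
             = (1/2) πᵀ Λ_t⁻¹ π + (1/2) π_νᵀ Λ_ν⁻¹ π_ν`,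
where `Λ_t = (J M⁻¹ Jᵀ)⁻¹` and `Λ_ν = Z M Zᵀ`. -/
theorem kinetic_energy_extended_momentum_split
    {n m : ℕ} (hmn : m ≤ n)
    (M : Matrix (Fin n) (Fin n) ℝ) (J : Matrix (Fin m) (Fin n) ℝ)
    (Z : Matrix (Fin (n - m)) (Fin n) ℝ)
    (hM : M.PosDef) (hJ : J.rank = m)
    (hZ : Z.rank = n - m) (hJZ : J * Zᵀ = 0)
    (B : Matrix (Fin n) (Fin m ⊕ Fin (n - m)) ℝ)
    (hB₁ : (fromRows J ((Z * M * Zᵀ)⁻¹ * Z * M)) * B =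
        (1 : Matrix (Fin m ⊕ Fin (n - m)) (Fin m ⊕ Fin (n - m)) ℝ))
    (hB₂ : B * (fromRows J ((Z * M * Zᵀ)⁻¹ * Z * M)) =
        (1 : Matrix (Fin n) (Fin n) ℝ))
    (p : Fin n → ℝ) (πe : Fin m ⊕ Fin (n - m) → ℝ)
    (π : Fin m → ℝ) (πν : Fin (n - m) → ℝ)
    (hπe : πe = Bᵀ.mulVec p)
    (hπ : π = fun i => πe (Sum.inl i))
    (hπν : πν = fun j => πe (Sum.inr j)) :
    (1 / 2 : ℝ) * (p ⬝ᵥ M⁻¹.mulVec p) =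
      (1 / 2 : ℝ) * (πe ⬝ᵥ ((fromRows J ((Z * M * Zᵀ)⁻¹ * Z * M)) * M⁻¹ *
        (fromRows J ((Z * M * Zᵀ)⁻¹ * Z * M))ᵀ).mulVec πe) ∧
    (1 / 2 : ℝ) * (p ⬝ᵥ M⁻¹.mulVec p) =
      (1 / 2 : ℝ) * (π ⬝ᵥ ((J * M⁻¹ * Jᵀ)⁻¹)⁻¹.mulVec π) +
      (1 / 2 : ℝ) * (πν ⬝ᵥ (Z * M * Zᵀ)⁻¹.mulVec πν) :=
  kinetic_energy_extended_momentum_split_general M J Z hM hJ hJZ B hB₂ p πe π πν hπe hπ hπν
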